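/- arXiv:2601.10322 — 3 statements merged into one kernel-verified Lean document; each statement's English description precedes it below -/
import Mathlib

section
/- Let A be an n×n tridiagonal matrix with all sub- and superdiagonal entries nonzero, and b = c·e_{n-1} with c ≠ 0. If x = A^{-1}b (A invertible) satisfies x[0] ≠ 0, then for every k < n, the vector x does not belong to the Krylov space K_k(A,b); in particular any Krylov method with zero initial guess requires at least n iterations to produce x exactly. -/
open Matrix

def krylov (n k : ℕ) (A : Matrix (Fin n) (Fin n) ℝ) (b : Fin n → ℝ) :
    Submodule ℝ (Fin n → ℝ) :=
  Submodule.span ℝ {v | ∃ m < k, v = (A ^ m).mulVec b}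

def reachLE (n : ℕ) (A : Matrix (Fin n) (Fin n) ℝ) : ℕ → Fin n → Fin n → Prop
  | 0 => fun i j => i = j
  | m + 1 => fun i j => ∃ x : Fin n, (x = i ∨ A i x ≠ 0 ∨ A x i ≠ 0) ∧ reachLE n A m x j

lemma tri_pow_far (n : ℕ) (A : Matrix (Fin n) (Fin n) ℝ)
    (htri : ∀ i j : Fin n, 1 < ((i : ℤ) - (j : ℤ)).natAbs → A i j = 0) :
    ∀ m (i j : Fin n), m < ((i : ℤ) - (j : ℤ)).natAbs → (A ^ m) i j = 0 := by
  intro m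
  induction m with
  | zero =>
    intro i j h
    rw [pow_zero, Matrix.one_apply]
    split
    · next he => subst he; simp at h
    · rfl
  | succ m ih =>
    intro i j h
    rw [pow_succ', Matrix.mul_apply]
    apply Finset.sum_eq_zero
    intro l _
    by_cases hl : 1 < ((i : ℤ) - (l : ℤ)).natAbs
    · rw [htri i l hl, zero_mul]
    · rw [ih l j (by omega), mul_zero]

theorem stmt2 (n : ℕ) (hn : 0 < n) (A : Matrix (Fin n) (Fin n) ℝ)
    (htri : ∀ i j : Fin n, 1 < ((i : ℤ) - (j : ℤ)).natAbs → A i j = 0)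
    (hsub : ∀ i : Fin n, ∀ h : (i : ℕ) + 1 < n,
      A i ⟨(i : ℕ) + 1, h⟩ ≠ 0 ∧ A ⟨(i : ℕ) + 1, h⟩ i ≠ 0)
    (hAdet : IsUnit A.det) (c : ℝ) (hc : c ≠ 0) (x : Fin n → ℝ)
    (hx : A.mulVec x = Pi.single (⟨n - 1, by omega⟩ : Fin n) c)
    (hx0 : x ⟨0, hn⟩ ≠ 0) (k : ℕ) (hk : k < n) :
    x ∉ krylov n k A (Pi.single (⟨n - 1, by omega⟩ : Fin n) c) := by
  intro hmem
  apply hx0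
  have hle : krylov n k A (Pi.single (⟨n - 1, by omega⟩ : Fin n) c) ≤
      LinearMap.ker (LinearMap.proj (R := ℝ) (φ := fun _ : Fin n => ℝ) ⟨0, hn⟩) := by
    rw [krylov, Submodule.span_le]
    rintro v ⟨m, hm, rfl⟩
    simp only [SetLike.mem_coe, LinearMap.mem_ker, LinearMap.proj_apply]
    rw [Matrix.mulVec, dotProduct]
    apply Finset.sum_eq_zero
    intro j _
    rcases eq_or_ne j (⟨n - 1, by omega⟩ : Fin n) with rfl | hj
    · rw [tri_pow_far n A htri m _ _ (by simp; omega), zero_mul]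
    · rw [Pi.single_eq_of_ne hj, mul_zero]
  exact hle hmem
end

section
/- Let A ∈ ℝ^{n×n} be symmetric positive definite and b a vector. If x ∈ K_k(A,b) and i is an index with graph distance (in the adjacency graph of A) greater than k from every index in the support of b, then the residual component (b − Ax)[i] equals b[i]; in particular, information from b cannot reduce residual components beyond distance k in k Krylov steps. -/
open Matrix

lemma reachLE_succ (n : ℕ) (A : Matrix (Fin n) (Fin n) ℝ) (m : ℕ) (i j : Fin n)
    (h : reachLE n A m i j) : reachLE n A (m + 1) i j :=
  ⟨i, Or.inl rfl, h⟩

lemma reachLE_mono (n : ℕ) (A : Matrix (Fin n) (Fin n) ℝ) {m k : ℕ} (hmk : m ≤ k)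
    (i j : Fin n) (h : reachLE n A m i j) : reachLE n A k i j := by
  induction hmk with
  | refl => exact h
  | step _ ih => exact reachLE_succ _ _ _ _ _ ih

lemma key (n : ℕ) (A : Matrix (Fin n) (Fin n) ℝ) (b : Fin n → ℝ) :
    ∀ (m : ℕ) (i : Fin n), (∀ j, b j ≠ 0 → ¬ reachLE n A m i j) →
      (A ^ m).mulVec b i = 0 := by
  intro m
  induction m with
  | zero =>
    intro i h
    simp only [pow_zero, one_mulVec]
    by_contra hb
    exact h i hb rfl
  | succ m ih =>
    intro i h
    rw [pow_succ', ← mulVec_mulVec]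
    show ∑ x, A i x * ((A ^ m).mulVec b) x = 0
    refine Finset.sum_eq_zero fun x _ => ?_
    by_cases hAix : A i x = 0
    · rw [hAix, zero_mul]
    · rw [ih x (fun j hb hr => h j hb ⟨x, Or.inr (Or.inl hAix), hr⟩), mul_zero]

theorem stmt8 (n k : ℕ) (A : Matrix (Fin n) (Fin n) ℝ) (hA : A.PosDef)
    (b x : Fin n → ℝ) (hx : x ∈ krylov n k A b) (i : Fin n)
    (hi : ∀ j : Fin n, b j ≠ 0 → ¬ reachLE n A k i j) :
    (b - A.mulVec x) i = b i := by
  have hz : A.mulVec x i = 0 := by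
    induction hx using Submodule.span_induction with
    | mem v hv =>
      obtain ⟨m, hm, rfl⟩ := hv
      rw [mulVec_mulVec, ← pow_succ']
      exact key n A b (m + 1) i fun j hb hr =>
        hi j hb (reachLE_mono n A hm i j hr)
    | zero => simp
    | add u v hu hv ihu ihv => rw [mulVec_add]; simp [ihu, ihv]
    | smul c u hu ihu => rw [mulVec_smul]; simp [ihu]
  simp [Pi.sub_apply, hz]
end

section
/- Let A ∈ ℝ^{n×n} be SPD with adjacency-graph diameter D, and suppose b is supported at a single vertex s with A^{-1}b nonzero at some vertex at distance D from s. Then CG with zero initial guess cannot terminate (produce zero residual) in fewer than D + 1 iterations, regardless of the condition number of A. -/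
open Matrix

lemma pow_mulVec_support (n : ℕ) (A : Matrix (Fin n) (Fin n) ℝ) (s : Fin n)
    (b : Fin n → ℝ) (hb : ∀ j : Fin n, j ≠ s → b j = 0) :
    ∀ m (j : Fin n), (A ^ m).mulVec b j ≠ 0 → reachLE n A m j s := by
  intro m
  induction m with
  | zero =>
    intro j h
    rw [pow_zero, Matrix.one_mulVec] at h
    by_contra hj
    exact h (hb j hj)
  | succ m ih =>
    intro j h
    rw [pow_succ', ← Matrix.mulVec_mulVec] at h
    have : ∃ y : Fin n, A j y * (A ^ m).mulVec b y ≠ 0 := by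
      by_contra hc
      push_neg at hc
      refine h ?_
      show (fun i => _ ⬝ᵥ _) j = 0
      simpa [dotProduct, Matrix.mulVec] using Finset.sum_eq_zero fun y _ => hc y
    obtain ⟨y, hy⟩ := this
    exact ⟨y, Or.inr (Or.inl fun h0 => hy (by simp [h0])),
      ih y fun h0 => hy (by simp [h0])⟩

theorem stmt19 (n D : ℕ) (A : Matrix (Fin n) (Fin n) ℝ) (hA : A.PosDef)
    (s : Fin n) (b : Fin n → ℝ) (hb : ∀ j : Fin n, j ≠ s → b j = 0)
    (hdiam : ∀ i j : Fin n, reachLE n A D i j)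
    (xs : Fin n → ℝ) (hxs : A.mulVec xs = b)
    (t : Fin n) (hreach : reachLE n A D t s) (hdist : ∀ m : ℕ, reachLE n A m t s → D ≤ m)
    (hxst : xs t ≠ 0)
    (k : ℕ) (hk : k ≤ D) (x : Fin n → ℝ) (hx : x ∈ krylov n k A b) :
    b - A.mulVec x ≠ 0 := by
  -- every element of the Krylov space vanishes at t
  have hxt : x t = 0 := by
    refine Submodule.span_induction ?_ rfl ?_ ?_ hx
    · rintro v ⟨m, hm, rfl⟩
      by_contra hv
      have := hdist m (pow_mulVec_support n A s b hb m t hv)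
      omega
    · intro u v _ _ hu hv
      simp [Pi.add_apply, hu, hv]
    · intro a u _ hu
      simp [Pi.smul_apply, hu]
  intro hres
  have hAx : A.mulVec x = b := by
    have := sub_eq_zero.mp hres
    exact this.symm
  have hinj : Function.Injective A.mulVec := by
    have : IsUnit A.det := isUnit_iff_ne_zero.mpr (ne_of_gt hA.det_pos)
    have := A.invertibleOfIsUnitDet this
    exact Matrix.mulVec_injective_of_invertible A
  have : x = xs := hinj (by rw [hAx, hxs])
  rw [this] at hxt
  exact hxst hxt
end
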